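/- Let K ∈ 𝒮(ℝ²) be Schwartz and φ : ℝ² → ℂ satisfy ⟨x⟩^{2+ε}φ ∈ L^∞ for some ε > 0. Then for every x ∈ ℝ², n² Σ_{k∈ℤ²} |∫_{ℝ²} K(x−y) φ(ny−k) dy|² → |∫_{ℝ²} φ(z)dz|² · ∫_{ℝ²} |K(z)|² dz as n → ∞. -/

import Mathlib

/-!
Substituting `y = (w + k) / n` turns the `k`-th integral into `n⁻² F_n(k)` with
`F_n(k) = ∫ K(x - (w + k) / n) φ(w) dw` (`rescaledCoeff K φ x n k`), and `n⁻² ∑_k |F_n(k)|²`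
is the integral over `u` of the step function `|F_n(⌊n u⌋)|²`, constant on the cubes of side
`1 / n`. Pointwise `F_n(⌊n u⌋) → K(x - u) ∫ φ` by dominated convergence in `w`. Splitting
`1 + ‖x - u‖` according to whether it is mostly carried by the argument of `K` or by that of `φ`
gives the uniform bound `|F_n(⌊n u⌋)| ≤ C (1 + ‖x - u‖)⁻²`, square integrable on ℝ², so
dominated convergence in `u` yields the limit `∫ |K(x - u)|² du · |∫ φ|²`.
-/

open MeasureTheory Filter

noncomputable section

/-- ℝ² as a Euclidean space. -/
abbrev E2 : Type := EuclideanSpace ℝ (Fin 2)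

/-- The lattice point `k ∈ ℤ²` viewed as a vector in ℝ². -/
def latt (k : Fin 2 → ℤ) : E2 := WithLp.toLp 2 (fun i => (k i : ℝ))

open Real Module Topology

section Weights

variable {E : Type*} [NormedAddCommGroup E]

theorem rpow_neg_le_mul_rpow_neg {x y c m : ℝ} (hx : 0 < x) (hy : 0 < y) (hm : 0 ≤ m)
    (h : y ≤ c * x) : x ^ (-m) ≤ c ^ m * y ^ (-m) := by
  have hc : 0 < c := pos_of_mul_pos_left (hy.trans_le h) hx.le
  rw [rpow_neg hx.le, rpow_neg hy.le, ← div_eq_mul_inv, le_div_iff₀ (by positivity),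
    inv_mul_le_iff₀ (by positivity), ← mul_rpow hx.le hc.le, mul_comm x]
  exact rpow_le_rpow hy.le h hm

/-- Peetre's inequality. -/
theorem one_add_norm_rpow_neg_le (a b : E) {m : ℝ} (hm : 0 ≤ m) :
    (1 + ‖b‖) ^ (-m) ≤ (1 + ‖a - b‖) ^ m * (1 + ‖a‖) ^ (-m) := by
  refine rpow_neg_le_mul_rpow_neg (by positivity) (by positivity) hm ?_
  nlinarith [norm_le_norm_sub_add a b, norm_nonneg (a - b), norm_nonneg b]

theorem one_add_norm_rpow_neg_mul_le [NormedSpace ℝ E] {p q m t : ℝ} (hm : 0 ≤ m)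
    (hmp : m ≤ p) (hmq : m ≤ q) (ht : 0 < t) (b w : E) :
    (1 + ‖b - t⁻¹ • w‖) ^ (-q) * (1 + ‖w‖) ^ (-p) ≤
      (1 + ‖b‖) ^ (-m) *
        (2 ^ m * (1 + ‖w‖) ^ (-p) + (2 * t⁻¹) ^ m * (1 + ‖b - t⁻¹ • w‖) ^ (-q)) := by
  set s := ‖b - t⁻¹ • w‖
  have hs : 1 ≤ 1 + s := by simp [s]
  have hw : 1 ≤ 1 + ‖w‖ := by simp
  have hsplit : 1 + ‖b‖ ≤ (1 + s) + t⁻¹ * ‖w‖ := by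
    have := norm_le_norm_sub_add b (t⁻¹ • w)
    rw [norm_smul, Real.norm_of_nonneg (by positivity)] at this
    linarith
  have hq : (1 + s) ^ (-q) ≤ (1 + s) ^ (-m) := rpow_le_rpow_of_exponent_le hs (by linarith)
  have hp : (1 + ‖w‖) ^ (-p) ≤ (1 + ‖w‖) ^ (-m) := rpow_le_rpow_of_exponent_le hw (by linarith)
  have hb : 0 ≤ (1 + ‖b‖) ^ (-m) := by positivity
  rcases le_or_gt (1 + ‖b‖) (2 * (1 + s)) with h | h
  · have key : (1 + s) ^ (-q) ≤ 2 ^ m * (1 + ‖b‖) ^ (-m) :=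
      hq.trans (rpow_neg_le_mul_rpow_neg (by positivity) (by positivity) hm h)
    calc (1 + s) ^ (-q) * (1 + ‖w‖) ^ (-p)
        ≤ 2 ^ m * (1 + ‖b‖) ^ (-m) * (1 + ‖w‖) ^ (-p) := by gcongr
      _ ≤ _ := by nlinarith [mul_nonneg hb (by positivity : 0 ≤ (2 * t⁻¹) ^ m * (1 + s) ^ (-q))]
  · -- now `‖t⁻¹ • w‖` carries half of `1 + ‖b‖`, so the decay in `w` pays for `(1 + ‖b‖) ^ (-m)`
    have h' : 1 + ‖b‖ ≤ (2 * t⁻¹) * (1 + ‖w‖) := by nlinarith [inv_pos.2 ht]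
    have key : (1 + ‖w‖) ^ (-p) ≤ (2 * t⁻¹) ^ m * (1 + ‖b‖) ^ (-m) :=
      hp.trans (rpow_neg_le_mul_rpow_neg (by positivity) (by positivity) hm h')
    calc (1 + s) ^ (-q) * (1 + ‖w‖) ^ (-p)
        ≤ (1 + s) ^ (-q) * ((2 * t⁻¹) ^ m * (1 + ‖b‖) ^ (-m)) := by gcongr
      _ ≤ _ := by nlinarith [mul_nonneg hb (by positivity : 0 ≤ (2 : ℝ) ^ m * (1 + ‖w‖) ^ (-p))]

theorem integral_one_add_norm_rpow_neg_mul_le [NormedSpace ℝ E] [FiniteDimensional ℝ E]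
    [MeasurableSpace E] [BorelSpace E] (μ : Measure E) [μ.IsAddHaarMeasure] {p q t : ℝ}
    (hp : (finrank ℝ E : ℝ) < p) (hq : (finrank ℝ E : ℝ) < q) (ht : 0 < t) (b : E) :
    ∫ w, (1 + ‖b - t⁻¹ • w‖) ^ (-q) * (1 + ‖w‖) ^ (-p) ∂μ ≤
      2 ^ finrank ℝ E * ((∫ w, (1 + ‖w‖) ^ (-p) ∂μ) + ∫ w, (1 + ‖w‖) ^ (-q) ∂μ) *
        (1 + ‖b‖) ^ (-(finrank ℝ E : ℝ)) := by
  set d := finrank ℝ E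
  have hip := integrable_one_add_norm (μ := μ) hp
  have hiq : Integrable (fun w => (1 + ‖b - t⁻¹ • w‖) ^ (-q)) μ :=
    ((integrable_one_add_norm hq).comp_sub_left b).comp_smul (inv_ne_zero ht.ne')
  have hscale : ∫ w, (1 + ‖b - t⁻¹ • w‖) ^ (-q) ∂μ = t ^ d * ∫ w, (1 + ‖w‖) ^ (-q) ∂μ := by
    rw [Measure.integral_comp_inv_smul_of_nonneg μ (fun v => (1 + ‖b - v‖) ^ (-q)) ht.le,
      integral_sub_left_eq_self (fun v => (1 + ‖v‖) ^ (-q)) μ b, smul_eq_mul]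
  calc ∫ w, (1 + ‖b - t⁻¹ • w‖) ^ (-q) * (1 + ‖w‖) ^ (-p) ∂μ
      ≤ ∫ w, (1 + ‖b‖) ^ (-(d : ℝ)) * (2 ^ (d : ℝ) * (1 + ‖w‖) ^ (-p) +
          (2 * t⁻¹) ^ (d : ℝ) * (1 + ‖b - t⁻¹ • w‖) ^ (-q)) ∂μ :=
        integral_mono_of_nonneg (ae_of_all _ fun w => by positivity)
          (((hip.const_mul _).add (hiq.const_mul _)).const_mul _)
          (ae_of_all _ fun w => one_add_norm_rpow_neg_mul_le (Nat.cast_nonneg d) hp.le hq.le ht b w)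
    _ = _ := by
      rw [integral_const_mul, integral_add (hip.const_mul _) (hiq.const_mul _), integral_const_mul,
        integral_const_mul, hscale, rpow_natCast, rpow_natCast, mul_pow, inv_pow]
      field_simp

end Weights

theorem SchwartzMap.exists_norm_le_mul_one_add_norm_rpow_neg {E F : Type*}
    [NormedAddCommGroup E] [NormedSpace ℝ E] [NormedAddCommGroup F] [NormedSpace ℝ F]
    (f : SchwartzMap E F) (k : ℕ) : ∃ C, ∀ x, ‖f x‖ ≤ C * (1 + ‖x‖) ^ (-(k : ℝ)) := by
  refine ⟨2 ^ k * (Finset.Iic (k, 0)).sup (fun m => SchwartzMap.seminorm ℝ m.1 m.2) f,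
    fun x => ?_⟩
  have h := SchwartzMap.one_add_le_sup_seminorm_apply (𝕜 := ℝ) (m := (k, 0)) le_rfl le_rfl f x
  rw [norm_iteratedFDeriv_zero] at h
  rw [rpow_neg (by positivity), rpow_natCast, ← div_eq_mul_inv, le_div_iff₀ (by positivity),
    mul_comm]
  exact h

theorem norm_le_of_one_add_sq_rpow_mul_norm_le {E F : Type*} [NormedAddCommGroup E]
    [NormedAddCommGroup F] {φ : E → F} {s M : ℝ} (hs : 0 < s)
    (hφ : ∀ x, (1 + ‖x‖ ^ 2) ^ (s / 2) * ‖φ x‖ ≤ M) (x : E) :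
    ‖φ x‖ ≤ 2 ^ (s / 2) * M * (1 + ‖x‖) ^ (-s) := by
  have hM : 0 ≤ M := (by positivity : (0 : ℝ) ≤ _).trans (hφ x)
  have hpos : 0 < (1 + ‖x‖ ^ 2) ^ (s / 2) := by positivity
  calc ‖φ x‖ ≤ M * (1 + ‖x‖ ^ 2) ^ (-s / 2) := by
        rw [neg_div, rpow_neg (by positivity), ← div_eq_mul_inv, le_div_iff₀ hpos, mul_comm]
        exact hφ x
    _ ≤ M * (2 ^ (s / 2) * (1 + ‖x‖) ^ (-s)) := by
        gcongr; exact rpow_neg_one_add_norm_sq_le x hs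
    _ = 2 ^ (s / 2) * M * (1 + ‖x‖) ^ (-s) := by ring

theorem tendsto_integral_comp_mul_of_tendsto {α E 𝕜 ι : Type*} [MeasurableSpace α]
    {μ : Measure α} [TopologicalSpace E] [RCLike 𝕜] {l : Filter ι} [l.IsCountablyGenerated]
    {K : E → 𝕜} {C : ℝ} {y : E} (hK : ContinuousAt K y) (hKC : ∀ v, ‖K v‖ ≤ C) {φ : α → 𝕜}
    (hφ : Integrable φ μ) {g : ι → α → E} (hg : ∀ i, AEStronglyMeasurable (fun w => K (g i w)) μ)
    (hlim : ∀ w, Tendsto (fun i => g i w) l (𝓝 y)) :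
    Tendsto (fun i => ∫ w, K (g i w) * φ w ∂μ) l (𝓝 (K y * ∫ w, φ w ∂μ)) := by
  rw [← integral_const_mul]
  refine tendsto_integral_filter_of_dominated_convergence (fun w => C * ‖φ w‖)
    (Eventually.of_forall fun i => ?_) (Eventually.of_forall fun i => ae_of_all _ fun w => ?_)
    (hφ.norm.const_mul C) (ae_of_all _ fun w => ((hK.tendsto).comp (hlim w)).mul_const (φ w))
  · exact (hg i).mul hφ.aestronglyMeasurable
  · rw [norm_mul]; gcongr; exact hKC _

def latticeFloor (n : ℕ) (u : E2) : Fin 2 → ℤ := fun i => ⌊(n : ℝ) * u i⌋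

theorem measurable_latticeFloor (n : ℕ) : Measurable (latticeFloor n) :=
  measurable_pi_lambda _ fun i => (measurable_const.mul
    ((measurable_pi_apply i).comp (MeasurableEquiv.toLp 2 (Fin 2 → ℝ)).symm.measurable)).floor

theorem volume_latticeFloor_eq {n : ℕ} (hn : 0 < n) (k : Fin 2 → ℤ) :
    volume {u : E2 | latticeFloor n u = k} = ENNReal.ofReal (n : ℝ)⁻¹ ^ 2 := by
  have hn' : (0 : ℝ) < n := by exact_mod_cast hn
  set S : Set (Fin 2 → ℝ) := Set.univ.pi fun i => Set.Ico ((k i : ℝ) / n) ((k i + 1) / n)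
  have hS :
      {u : E2 | latticeFloor n u = k} = (MeasurableEquiv.toLp 2 (Fin 2 → ℝ)).symm ⁻¹' S := by
    ext u
    simp only [Set.mem_ofPred_eq, Set.mem_preimage, S, Set.mem_univ_pi, Set.mem_Ico, funext_iff,
      latticeFloor, Int.floor_eq_iff, div_le_iff₀ hn', lt_div_iff₀ hn']
    exact forall_congr' fun i => and_congr (by rw [mul_comm]; rfl) (by rw [mul_comm]; rfl)
  rw [hS, (EuclideanSpace.volume_preserving_symm_measurableEquiv_toLp (Fin 2)).measure_preimage
    (MeasurableSet.univ_pi fun i => measurableSet_Ico).nullMeasurableSet, volume_pi_pi]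
  simp only [Real.volume_Ico, Fin.prod_univ_two, sq]
  congr 2 <;> field_simp <;> ring

theorem lintegral_comp_latticeFloor {n : ℕ} (hn : 0 < n) (F : (Fin 2 → ℤ) → ENNReal) :
    ∫⁻ u : E2, F (latticeFloor n u) = ∑' k, F k * ENNReal.ofReal (n : ℝ)⁻¹ ^ 2 := by
  have hmeas k : MeasurableSet {u : E2 | latticeFloor n u = k} :=
    measurable_latticeFloor n (measurableSet_singleton k)
  have hdisj : Pairwise (Function.onFun Disjoint fun k => {u : E2 | latticeFloor n u = k}) :=
    fun k₁ k₂ hne => Set.disjoint_left.2 fun u h₁ h₂ => hne (h₁.symm.trans h₂)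
  have hcover : (⋃ k, {u : E2 | latticeFloor n u = k}) = Set.univ :=
    Set.eq_univ_of_forall fun u => Set.mem_iUnion.2 ⟨_, rfl⟩
  rw [← setLIntegral_univ, ← hcover, lintegral_iUnion hmeas hdisj]
  refine tsum_congr fun k => ?_
  rw [setLIntegral_congr_fun (hmeas k) fun u (hu : latticeFloor n u = k) => by rw [hu],
    setLIntegral_const, volume_latticeFloor_eq hn]

theorem integral_comp_latticeFloor {n : ℕ} (hn : 0 < n) {F : (Fin 2 → ℤ) → ℝ} (hF : 0 ≤ F) :
    ∫ u : E2, F (latticeFloor n u) = ((n : ℝ) ^ 2)⁻¹ * ∑' k, F k := by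
  rw [integral_eq_lintegral_of_nonneg_ae (f := fun u => F (latticeFloor n u))
      (ae_of_all _ fun u => hF _)
      ((measurable_of_countable F).comp (measurable_latticeFloor n)).aestronglyMeasurable,
    lintegral_comp_latticeFloor hn (fun k => ENNReal.ofReal (F k)),
    ENNReal.tsum_toReal_eq fun k => by finiteness]
  simp only [ENNReal.toReal_mul, ENNReal.toReal_pow, ENNReal.toReal_ofReal (hF _),
    ENNReal.toReal_ofReal (by positivity : (0 : ℝ) ≤ (n : ℝ)⁻¹), tsum_mul_right, inv_pow]
  ring

theorem norm_inv_smul_latt_latticeFloor_sub_le {n : ℕ} (hn : 0 < n) (u : E2) :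
    ‖(n : ℝ)⁻¹ • latt (latticeFloor n u) - u‖ ≤ 2 * (n : ℝ)⁻¹ := by
  have hn' : (0 : ℝ) < n := by exact_mod_cast hn
  have hcoord i : |((n : ℝ)⁻¹ • latt (latticeFloor n u) - u) i| ≤ (n : ℝ)⁻¹ := by
    have h₁ := Int.floor_le ((n : ℝ) * u i)
    have h₂ := Int.sub_one_lt_floor ((n : ℝ) * u i)
    have e : (n : ℝ)⁻¹ * ⌊(n : ℝ) * u i⌋ - u i = (n : ℝ)⁻¹ * (⌊(n : ℝ) * u i⌋ - n * u i) := by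
      field_simp
    change |(n : ℝ)⁻¹ * ⌊(n : ℝ) * u i⌋ - u i| ≤ (n : ℝ)⁻¹
    rw [e, abs_mul, abs_of_pos (inv_pos.2 hn')]
    exact mul_le_of_le_one_right (inv_pos.2 hn').le (abs_le.2 ⟨by linarith, by linarith⟩)
  rw [EuclideanSpace.norm_eq, Fin.sum_univ_two, Real.norm_eq_abs, Real.norm_eq_abs]
  refine sqrt_le_iff.2 ⟨by positivity, ?_⟩
  nlinarith [hcoord 0, hcoord 1, abs_nonneg (((n : ℝ)⁻¹ • latt (latticeFloor n u) - u) 0),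
    abs_nonneg (((n : ℝ)⁻¹ • latt (latticeFloor n u) - u) 1)]

theorem tendsto_inv_smul_latt_latticeFloor (u : E2) :
    Tendsto (fun n : ℕ => (n : ℝ)⁻¹ • latt (latticeFloor n u)) atTop (𝓝 u) := by
  rw [tendsto_iff_norm_sub_tendsto_zero]
  refine squeeze_zero' (Eventually.of_forall fun n => norm_nonneg _)
    ((eventually_gt_atTop 0).mono fun n hn => norm_inv_smul_latt_latticeFloor_sub_le hn u) ?_
  simpa using (tendsto_inv_atTop_zero.comp tendsto_natCast_atTop_atTop).const_mul (2 : ℝ)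

def rescaledCoeff (K φ : E2 → ℂ) (x : E2) (n : ℕ) (k : Fin 2 → ℤ) : ℂ :=
  ∫ w, K (x - (n : ℝ)⁻¹ • (w + latt k)) * φ w

theorem integral_mul_comp_smul_sub_latt {n : ℕ} (hn : 0 < n) (K φ : E2 → ℂ) (x : E2)
    (k : Fin 2 → ℤ) :
    ∫ y, K (x - y) * φ ((n : ℝ) • y - latt k) = ((n : ℝ) ^ 2)⁻¹ • rescaledCoeff K φ x n k := by
  have hn' : (n : ℝ) ≠ 0 := by positivity
  set f : E2 → ℂ := fun y => K (x - y) * φ ((n : ℝ) • y - latt k)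
  have hscale : rescaledCoeff K φ x n k = (n : ℝ) ^ 2 • ∫ y, f y :=
    calc rescaledCoeff K φ x n k = ∫ w, f ((n : ℝ)⁻¹ • (w + latt k)) :=
          integral_congr_ae (ae_of_all _ fun w => by simp [f, smul_smul, hn'])
      _ = ∫ w, f ((n : ℝ)⁻¹ • w) := integral_add_right_eq_self (fun w => f ((n : ℝ)⁻¹ • w)) _
      _ = (n : ℝ) ^ 2 • ∫ y, f y := by
          rw [Measure.integral_comp_inv_smul_of_nonneg _ _ (Nat.cast_nonneg n),
            finrank_euclideanSpace_fin]
  rw [hscale, smul_smul, inv_mul_cancel₀ (by positivity), one_smul]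

theorem sq_mul_tsum_eq_integral_rescaledCoeff {n : ℕ} (hn : 0 < n) (K φ : E2 → ℂ) (x : E2) :
    (n : ℝ) ^ 2 * ∑' k, ‖∫ y, K (x - y) * φ ((n : ℝ) • y - latt k)‖ ^ 2 =
      ∫ u, ‖rescaledCoeff K φ x n (latticeFloor n u)‖ ^ 2 := by
  have hn' : (n : ℝ) ≠ 0 := by positivity
  rw [integral_comp_latticeFloor hn (F := fun k => ‖rescaledCoeff K φ x n k‖ ^ 2)
    fun k => sq_nonneg _]
  simp_rw [integral_mul_comp_smul_sub_latt hn, norm_smul, mul_pow, norm_inv, norm_pow,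
    Real.norm_natCast]
  rw [tsum_mul_left]
  field_simp

theorem norm_rescaledCoeff_le {K φ : E2 → ℂ} {p q C M : ℝ} (hp : 2 < p) (hq : 0 ≤ q)
    (hK : ∀ v, ‖K v‖ ≤ C * (1 + ‖v‖) ^ (-q))
    (hφ : ∀ w, ‖φ w‖ ≤ M * (1 + ‖w‖) ^ (-p)) (x : E2) (n : ℕ) (k : Fin 2 → ℤ) :
    ‖rescaledCoeff K φ x n k‖ ≤ C * M *
      ∫ w, (1 + ‖(x - (n : ℝ)⁻¹ • latt k) - (n : ℝ)⁻¹ • w‖) ^ (-q) * (1 + ‖w‖) ^ (-p) := by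
  set b := x - (n : ℝ)⁻¹ • latt k
  have hC : 0 ≤ C := (norm_nonneg _).trans (by simpa using hK 0)
  have hM : 0 ≤ M := (norm_nonneg _).trans (by simpa using hφ 0)
  have hsplit w : x - (n : ℝ)⁻¹ • (w + latt k) = b - (n : ℝ)⁻¹ • w := by
    simp only [b, smul_add]; abel
  have hint : Integrable fun w : E2 => (1 + ‖b - (n : ℝ)⁻¹ • w‖) ^ (-q) * (1 + ‖w‖) ^ (-p) :=
    (integrable_one_add_norm (by simpa using hp)).bdd_mul (c := 1)
      ((Continuous.rpow_const (by fun_prop) fun w => Or.inl (by positivity)).aestronglyMeasurable)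
      (ae_of_all _ fun w => by
        rw [Real.norm_of_nonneg (by positivity)]
        exact rpow_le_one_of_one_le_of_nonpos (by simp) (by linarith))
  rw [← integral_const_mul]
  refine (norm_integral_le_integral_norm _).trans (integral_mono_of_nonneg
    (ae_of_all _ fun w => norm_nonneg _) (hint.const_mul _) (ae_of_all _ fun w => ?_))
  dsimp only
  rw [norm_mul, hsplit, mul_mul_mul_comm]
  exact mul_le_mul (hK _) (hφ w) (norm_nonneg _) (by positivity)

theorem norm_rescaledCoeff_latticeFloor_le (K : SchwartzMap E2 ℂ) {φ : E2 → ℂ} {p M : ℝ}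
    (hp : 2 < p) (hφ : ∀ w, ‖φ w‖ ≤ M * (1 + ‖w‖) ^ (-p)) (x : E2) :
    ∃ C, ∀ n : ℕ, 0 < n → ∀ u,
      ‖rescaledCoeff K φ x n (latticeFloor n u)‖ ≤ C * (1 + ‖x - u‖) ^ (-2 : ℝ) := by
  obtain ⟨C_K, hK⟩ := K.exists_norm_le_mul_one_add_norm_rpow_neg 4
  have hCK : 0 ≤ C_K := (norm_nonneg _).trans (by simpa using hK 0)
  have hM : 0 ≤ M := (norm_nonneg _).trans (by simpa using hφ 0)
  obtain ⟨C_I, hCI, hI⟩ : ∃ C_I : ℝ, 0 ≤ C_I ∧ ∀ t : ℝ, 0 < t → ∀ b : E2,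
      ∫ w, (1 + ‖b - t⁻¹ • w‖) ^ (-((4 : ℕ) : ℝ)) * (1 + ‖w‖) ^ (-p) ≤
        C_I * (1 + ‖b‖) ^ (-2 : ℝ) :=
    ⟨2 ^ 2 * ((∫ w : E2, (1 + ‖w‖) ^ (-p)) + ∫ w : E2, (1 + ‖w‖) ^ (-4 : ℝ)), by positivity,
      fun t ht b => by
        simpa using integral_one_add_norm_rpow_neg_mul_le volume (p := p) (q := 4)
          (by simpa using hp) (by norm_num) ht b⟩
  refine ⟨C_K * M * (C_I * 3 ^ (2 : ℝ)), fun n hn u => ?_⟩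
  set b := x - (n : ℝ)⁻¹ • latt (latticeFloor n u)
  have hdist : ‖(x - u) - b‖ ≤ 2 := by
    have h1 : (1 : ℝ) ≤ n := by exact_mod_cast hn
    have h2 := norm_inv_smul_latt_latticeFloor_sub_le hn u
    rw [show (x - u) - b = (n : ℝ)⁻¹ • latt (latticeFloor n u) - u by simp only [b]; abel]
    exact h2.trans (by linarith [inv_le_one_of_one_le₀ h1])
  calc ‖rescaledCoeff K φ x n (latticeFloor n u)‖
      ≤ C_K * M * ∫ w, (1 + ‖b - (n : ℝ)⁻¹ • w‖) ^ (-(4 : ℕ) : ℝ) * (1 + ‖w‖) ^ (-p) :=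
        norm_rescaledCoeff_le hp (by positivity) hK hφ x n _
    _ ≤ C_K * M * (C_I * (1 + ‖b‖) ^ (-2 : ℝ)) := by
        gcongr; exact hI n (by positivity) b
    _ ≤ C_K * M * (C_I * ((1 + ‖(x - u) - b‖) ^ (2 : ℝ) * (1 + ‖x - u‖) ^ (-2 : ℝ))) := by
        gcongr; exact one_add_norm_rpow_neg_le _ _ (by norm_num)
    _ ≤ C_K * M * (C_I * (3 ^ (2 : ℝ) * (1 + ‖x - u‖) ^ (-2 : ℝ))) := by
        gcongr; linarith
    _ = C_K * M * (C_I * 3 ^ (2 : ℝ)) * (1 + ‖x - u‖) ^ (-2 : ℝ) := by ring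

theorem tendsto_rescaledCoeff_latticeFloor (K : SchwartzMap E2 ℂ) {φ : E2 → ℂ}
    (hφ : Integrable φ) (x u : E2) :
    Tendsto (fun n : ℕ => rescaledCoeff K φ x n (latticeFloor n u)) atTop
      (𝓝 (K (x - u) * ∫ w, φ w)) := by
  refine tendsto_integral_comp_mul_of_tendsto K.continuous.continuousAt
    (K.toBoundedContinuousFunction.norm_coe_le_norm) hφ
    (fun n => (K.continuous.comp (by fun_prop)).aestronglyMeasurable) fun w => ?_
  have hw : Tendsto (fun n : ℕ => (n : ℝ)⁻¹ • w) atTop (𝓝 0) := by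
    simpa using
      (tendsto_inv_atTop_zero.comp (tendsto_natCast_atTop_atTop (R := ℝ))).smul_const w
  simpa [smul_add] using tendsto_const_nhds.sub (hw.add (tendsto_inv_smul_latt_latticeFloor u))

/-- for Schwartz `K` and a single-site potential `φ` with
`⟨x⟩^{2+ε} φ ∈ L^∞`,
`n² ∑_{k∈ℤ²} |∫ K(x-y) φ(ny-k) dy|² → |∫φ|² ∫|K|²`. -/
theorem stmt15 (K : SchwartzMap E2 ℂ) (φ : E2 → ℂ) (ε M : ℝ) (hε : 0 < ε)
    (hφm : Measurable φ)
    (hφ : ∀ x : E2, (1 + ‖x‖ ^ 2) ^ ((2 + ε) / 2) * ‖φ x‖ ≤ M) (x : E2) :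
    Tendsto (fun n : ℕ => (n : ℝ) ^ 2 * ∑' k : Fin 2 → ℤ,
        ‖∫ y : E2, K (x - y) * φ ((n : ℝ) • y - latt k)‖ ^ 2)
      atTop (nhds (‖∫ z : E2, φ z‖ ^ 2 * ∫ z : E2, ‖K z‖ ^ 2)) := by
  have hφdecay := norm_le_of_one_add_sq_rpow_mul_norm_le (by linarith) hφ
  have hφint : Integrable φ :=
    ((integrable_one_add_norm (by simp; linarith)).const_mul _).mono' hφm.aestronglyMeasurable
      (ae_of_all _ hφdecay)
  obtain ⟨C, hC⟩ := norm_rescaledCoeff_latticeFloor_le K (by linarith) hφdecay x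
  have hdom : ∀ n : ℕ, 0 < n → ∀ u,
      ‖‖rescaledCoeff K φ x n (latticeFloor n u)‖ ^ 2‖ ≤ C ^ 2 * (1 + ‖x - u‖) ^ (-4 : ℝ) := by
    intro n hn u
    rw [norm_pow, norm_norm, show (-4 : ℝ) = (-2) * (2 : ℕ) by norm_num, rpow_mul (by positivity),
      rpow_natCast, ← mul_pow]
    exact pow_le_pow_left₀ (norm_nonneg _) (hC n hn u) 2
  have hlim : Tendsto (fun n : ℕ => ∫ u, ‖rescaledCoeff K φ x n (latticeFloor n u)‖ ^ 2) atTop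
      (𝓝 (∫ u, ‖K (x - u) * ∫ z, φ z‖ ^ 2)) :=
    tendsto_integral_filter_of_dominated_convergence (fun u => C ^ 2 * (1 + ‖x - u‖) ^ (-4 : ℝ))
      (Eventually.of_forall fun n => (((measurable_of_countable (rescaledCoeff K φ x n)).comp
        (measurable_latticeFloor n)).norm.pow_const 2).aestronglyMeasurable)
      ((eventually_gt_atTop 0).mono fun n hn => ae_of_all _ (hdom n hn))
      (((integrable_one_add_norm (E := E2) (r := 4) (by norm_num)).comp_sub_left x).const_mul _)
      (ae_of_all _ fun u => (tendsto_rescaledCoeff_latticeFloor K hφint x u).norm.pow 2)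
  have hval : ∫ u, ‖K (x - u) * ∫ z, φ z‖ ^ 2 = ‖∫ z, φ z‖ ^ 2 * ∫ z, ‖K z‖ ^ 2 := by
    simp_rw [norm_mul, mul_pow]
    rw [integral_mul_const, integral_sub_left_eq_self (fun v => ‖K v‖ ^ 2), mul_comm]
  rw [hval] at hlim
  exact hlim.congr' ((eventually_gt_atTop 0).mono fun n hn =>
    (sq_mul_tsum_eq_integral_rescaledCoeff hn K φ x).symm)

end
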